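/- (Key TD-error expansion) For every λ ∈ (0,1) and every function φ : S → ℝ (viewed as a vector in ℝ^S), the following vector identity holds: r_π^{(λ)} + γ̃ · P_π^{(λ)} φ - φ = Σ_{t=0}^∞ (γλ)^t P_π^t ( r_π + γ P_π φ - φ ), where the right-hand series converges. -/

import Mathlib

open Matrix

attribute [local instance] Matrix.normedAddCommGroup Matrix.normedSpace

private theorem stoch_pow {S : Type*} [Fintype S] [DecidableEq S] (M : Matrix S S ℝ)
    (h0 : ∀ s s', 0 ≤ M s s') (h1 : ∀ s, ∑ s', M s s' = 1) (t : ℕ) :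
    (∀ s s', 0 ≤ (M ^ t) s s') ∧ (∀ s, ∑ s', (M ^ t) s s' = 1) := by
  induction t with
  | zero =>
    refine ⟨fun s s' => ?_, fun s => ?_⟩
    · rw [pow_zero, Matrix.one_apply]
      split <;> norm_num
    · rw [pow_zero]
      simp [Matrix.one_apply]
  | succ t ih =>
    refine ⟨fun s s' => ?_, fun s => ?_⟩
    · rw [pow_succ, Matrix.mul_apply]
      exact Finset.sum_nonneg fun k _ => mul_nonneg (ih.1 s k) (h0 k s')
    · simp_rw [pow_succ, Matrix.mul_apply]
      rw [Finset.sum_comm]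
      simp_rw [← Finset.mul_sum, h1]
      simpa using ih.2 s

private theorem stoch_mulVec_norm {S : Type*} [Fintype S] (M : Matrix S S ℝ)
    (h0 : ∀ s s', 0 ≤ M s s') (h1 : ∀ s, ∑ s', M s s' = 1) (w : S → ℝ) :
    ‖M.mulVec w‖ ≤ ‖w‖ := by
  rw [pi_norm_le_iff_of_nonneg (norm_nonneg w)]
  intro s
  rw [Matrix.mulVec, dotProduct]
  calc ‖∑ k, M s k * w k‖ ≤ ∑ k, ‖M s k * w k‖ := norm_sum_le _ _
    _ ≤ ∑ k, M s k * ‖w‖ := by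
        refine Finset.sum_le_sum fun k _ => ?_
        rw [norm_mul, Real.norm_of_nonneg (h0 s k)]
        exact mul_le_mul_of_nonneg_left (norm_le_pi_norm w k) (h0 s k)
    _ = ‖w‖ := by rw [← Finset.sum_mul, h1, one_mul]

/-- Key TD-error expansion: for any `φ : S → ℝ`,
`r_π^{(λ)} + γ̃ P_π^{(λ)} φ - φ = ∑_t (γλ)^t P_π^t (r_π + γ P_π φ - φ)`,
where the right-hand series converges. -/
theorem td_error_expansion
    {S A : Type*} [Fintype S] [Nonempty S] [DecidableEq S] [Fintype A] [Nonempty A]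
    (P : S → A → S → ℝ)
    (hP0 : ∀ s a s', 0 ≤ P s a s')
    (hP1 : ∀ s a, ∑ s', P s a s' = 1)
    (r : S → A → S → ℝ)
    (γ : ℝ) (hγ0 : 0 < γ) (hγ1 : γ < 1)
    (π : S → A → ℝ)
    (hπ0 : ∀ s a, 0 ≤ π s a)
    (hπ1 : ∀ s, ∑ a, π s a = 1)
    (Pπ : Matrix S S ℝ)
    (hPπ : ∀ s s', Pπ s s' = ∑ a, π s a * P s a s')
    (rπ : S → ℝ)
    (hrπ : ∀ s, rπ s = ∑ a, ∑ s', π s a * (P s a s' * r s a s'))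
    (lam : ℝ) (hlam0 : 0 < lam) (hlam1 : lam < 1)
    (tγ : ℝ) (htγ : tγ = γ * (1 - lam) / (1 - γ * lam))
    (Plam : Matrix S S ℝ)
    (hPlam : Plam = (1 - γ * lam) • ∑' t : ℕ, (γ * lam) ^ t • Pπ ^ (t + 1))
    (rlam : S → ℝ)
    (hrlam : rlam = ∑' t : ℕ, (γ * lam) ^ t • (Pπ ^ t).mulVec rπ) :
    ∀ φ : S → ℝ,
      Summable (fun t : ℕ =>
        (γ * lam) ^ t • (Pπ ^ t).mulVec (rπ + γ • Pπ.mulVec φ - φ)) ∧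
      rlam + tγ • Plam.mulVec φ - φ
        = ∑' t : ℕ, (γ * lam) ^ t • (Pπ ^ t).mulVec (rπ + γ • Pπ.mulVec φ - φ) := by
  intro φ
  set q : ℝ := γ * lam with hq
  have hq0 : 0 ≤ q := le_of_lt (mul_pos hγ0 hlam0)
  have hq1 : q < 1 := by nlinarith
  have hq1' : (1 : ℝ) - q ≠ 0 := by nlinarith
  -- Pπ is stochastic
  have hPπ0 : ∀ s s', 0 ≤ Pπ s s' := fun s s' => by
    rw [hPπ]
    exact Finset.sum_nonneg fun a _ => mul_nonneg (hπ0 s a) (hP0 s a s')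
  have hPπ1 : ∀ s, ∑ s', Pπ s s' = 1 := fun s => by
    simp_rw [hPπ]
    rw [Finset.sum_comm]
    simp_rw [← Finset.mul_sum, hP1, mul_one]
    exact hπ1 s
  have hpow := stoch_pow Pπ hPπ0 hPπ1
  -- geometric summability
  have hgeom : Summable fun t : ℕ => q ^ t := summable_geometric_of_lt_one hq0 hq1
  -- summability of vector series
  have hSvec : ∀ w : S → ℝ, Summable (fun t : ℕ => q ^ t • (Pπ ^ t).mulVec w) := by
    intro w
    refine Summable.of_norm_bounded (hgeom.mul_left ‖w‖) fun t => ?_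
    rw [norm_smul, Real.norm_of_nonneg (pow_nonneg hq0 t), mul_comm]
    exact mul_le_mul_of_nonneg_right
      (stoch_mulVec_norm _ (hpow t).1 (hpow t).2 w) (pow_nonneg hq0 t)
  have hSvec' : ∀ w : S → ℝ, Summable (fun t : ℕ => q ^ t • (Pπ ^ (t + 1)).mulVec w) := by
    intro w
    refine Summable.of_norm_bounded (hgeom.mul_left ‖w‖) fun t => ?_
    rw [norm_smul, Real.norm_of_nonneg (pow_nonneg hq0 t), mul_comm]
    exact mul_le_mul_of_nonneg_right
      (stoch_mulVec_norm _ (hpow (t+1)).1 (hpow (t+1)).2 w) (pow_nonneg hq0 t)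
  -- summability of the matrix series
  have hSmat : Summable (fun t : ℕ => q ^ t • Pπ ^ (t + 1)) := by
    refine Summable.of_norm_bounded hgeom fun t => ?_
    rw [norm_smul, Real.norm_of_nonneg (pow_nonneg hq0 t)]
    have : ‖Pπ ^ (t + 1)‖ ≤ 1 := by
      rw [Matrix.norm_le_iff (by norm_num : (0:ℝ) ≤ 1)]
      intro i j
      rw [Real.norm_of_nonneg ((hpow (t+1)).1 i j)]
      calc (Pπ ^ (t+1)) i j ≤ ∑ j', (Pπ ^ (t+1)) i j' :=
            Finset.single_le_sum (fun k _ => (hpow (t+1)).1 i k) (Finset.mem_univ j)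
        _ = 1 := (hpow (t+1)).2 i
    calc q ^ t * ‖Pπ ^ (t+1)‖ ≤ q ^ t * 1 :=
          mul_le_mul_of_nonneg_left this (pow_nonneg hq0 t)
      _ = q ^ t := mul_one _
  -- mulVec by φ as a continuous linear map in the matrix
  let Lφ : Matrix S S ℝ →L[ℝ] (S → ℝ) :=
    LinearMap.toContinuousLinearMap
      { toFun := fun M => M.mulVec φ
        map_add' := fun M N => Matrix.add_mulVec M N φ
        map_smul' := fun c M => Matrix.smul_mulVec c M φ }
  have hLφ : ∀ M : Matrix S S ℝ, Lφ M = M.mulVec φ := fun M => rfl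
  -- R := ∑' q^t • Pπ^{t+1} φ
  set R : S → ℝ := ∑' t : ℕ, q ^ t • (Pπ ^ (t + 1)).mulVec φ with hR
  have hPlamφ : Plam.mulVec φ = (1 - q) • R := by
    rw [hPlam, ← hLφ, Lφ.map_smul, ContinuousLinearMap.map_tsum _ hSmat]
    congr 1
    exact tsum_congr fun t => by rw [hLφ, Matrix.smul_mulVec]
  -- shift identity: ∑' q^t Pπ^t φ = φ + q • R
  have hshift : (∑' t : ℕ, q ^ t • (Pπ ^ t).mulVec φ) = φ + q • R := by
    rw [Summable.tsum_eq_zero_add (hSvec φ)]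
    congr 1
    · simp
    · rw [hR, ← Summable.tsum_const_smul q (hSvec' φ)]
      congr 1
      funext t
      rw [pow_succ, mul_comm, mul_smul]
  refine ⟨hSvec _, ?_⟩
  -- expand the RHS
  have hexp : ∀ t : ℕ, q ^ t • (Pπ ^ t).mulVec (rπ + γ • Pπ.mulVec φ - φ)
      = q ^ t • (Pπ ^ t).mulVec rπ + γ • (q ^ t • (Pπ ^ (t+1)).mulVec φ)
        - q ^ t • (Pπ ^ t).mulVec φ := by
    intro t
    rw [Matrix.mulVec_sub, Matrix.mulVec_add, Matrix.mulVec_smul,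
      Matrix.mulVec_mulVec, ← pow_succ]
    rw [smul_sub, smul_add]
    congr 1
    congr 1
    rw [smul_comm]
  rw [funext hexp, Summable.tsum_sub ((hSvec rπ).add ((hSvec' φ).const_smul γ)) (hSvec φ),
    Summable.tsum_add (hSvec rπ) ((hSvec' φ).const_smul γ),
    Summable.tsum_const_smul γ (hSvec' φ), ← hR, ← hrlam, hshift, hPlamφ]
  have htγq : tγ • ((1 - q) • R) = (γ - q) • R := by
    rw [smul_smul, htγ]
    congr 1
    field_simp
    ring
  rw [htγq]
  module
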